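/- arXiv:1707.02902 — 4 statements merged into one kernel-verified Lean document; each statement's English description precedes it below -/
import Mathlib

section
/- Let κ be a cardinal and X a set with |X| ≥ κ⁺. The club filter on [X]^κ (the filter generated by the club subsets of [X]^κ) is κ⁺-complete: the intersection of any κ-many sets from the filter is again in the filter. -/
open FirstOrder Set Cardinal

universe u

namespace Paper

/-! ### Clubs and stationary sets in `[A]^κ` -/

/-- `C` is a club of `[A]^κ`: every member is a `κ`-sized subset of `A`, every `κ`-sized
subset of `A` is contained in a member, and `C` is closed under unions of `⊆`-chains of
length (cardinality) at most `κ`. -/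
def IsClubOn {X : Type u} (κ : Cardinal.{u}) (A : Set X) (C : Set (Set X)) : Prop :=
  (∀ Y ∈ C, Y ⊆ A ∧ #Y = κ) ∧
  (∀ Y : Set X, Y ⊆ A → #Y = κ → ∃ Z ∈ C, Y ⊆ Z) ∧
  (∀ c : Set (Set X), c.Nonempty → c ⊆ C → IsChain (· ⊆ ·) c → #c ≤ κ → ⋃₀ c ∈ C)

/-- `S` is a stationary subset of `[A]^κ`: it meets every club of `[A]^κ`. -/
def IsStationaryOn {X : Type u} (κ : Cardinal.{u}) (A : Set X) (S : Set (Set X)) : Prop :=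
  (∀ Y ∈ S, Y ⊆ A ∧ #Y = κ) ∧ ∀ C : Set (Set X), IsClubOn κ A C → (S ∩ C).Nonempty

/-! ### Clubs and stationary sets of ordinals below `o` -/

def OrdClubIn (o : Ordinal.{u}) (C : Set Ordinal.{u}) : Prop :=
  (∀ a ∈ C, a < o) ∧ (∀ a < o, ∃ b ∈ C, a ≤ b) ∧
  ∀ s : Set Ordinal.{u}, s ⊆ C → s.Nonempty → sSup s < o → sSup s ∈ C

def OrdStationaryIn (o : Ordinal.{u}) (S : Set Ordinal.{u}) : Prop :=
  (∀ a ∈ S, a < o) ∧ ∀ C : Set Ordinal.{u}, OrdClubIn o C → (S ∩ C).Nonempty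

/-! ### The game `G(F)` of length `λ` and the filter `D_λ` -/

/-- Player II has a winning strategy in the length-`λ` game `G(F)` played with subsets of `P`
of size `≤ λ`: there is a strategy `σ` (depending on Player I's moves so far) such that for any
legal play `A` of Player I, Player II's responses are legal and the union of all sets played
belongs to `F`. -/
noncomputable def GameII {X : Type u} (lam : Cardinal.{u}) (P : Set X) (F : Set (Set X)) : Prop :=
  ∃ σ : (i : lam.ord.ToType) → (Set.Iic i → Set X) → Set X,
    ∀ A : lam.ord.ToType → Set X,
      (∀ i, A i ⊆ P ∧ #(A i) ≤ lam) →
      (∀ i j : lam.ord.ToType, j < i → A j ∪ σ j (fun k => A k.1) ⊆ A i) →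
      ((∀ i, A i ⊆ σ i (fun k => A k.1) ∧ σ i (fun k => A k.1) ⊆ P ∧
          #(σ i (fun k => A k.1)) ≤ lam) ∧
        (⋃ i, (A i ∪ σ i (fun k => A k.1))) ∈ F)

/-- Membership in the filter `D_λ(P)` generated by the sets for which Player II has a
winning strategy. -/
noncomputable def DFilterMem {X : Type u} (lam : Cardinal.{u}) (P : Set X)
    (F : Set (Set X)) : Prop :=
  ∃ (J : ℕ) (W : Fin J → Set (Set X)), (∀ j, GameII lam P (W j)) ∧ (⋂ j, W j) ⊆ F

/-! ### First-order formulas with parameters, types, Kim-dividing -/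

variable (L : FirstOrder.Language.{u, u}) (M : Type u) [L.Structure M]

/-- A formula in `n` free variables with a tuple of parameters from `M`. -/
structure PFormula (n : ℕ) : Type u where
  m : ℕ
  fml : L.Formula (Fin n ⊕ Fin m)
  params : Fin m → M

variable {L M}

def PFormula.Realize {n : ℕ} (F : PFormula L M n) (a : Fin n → M) : Prop :=
  F.fml.Realize (Sum.elim a F.params)

/-- The parameters of `F` all lie in `A`. -/
def PFormula.Over {n : ℕ} (F : PFormula L M n) (A : Set M) : Prop :=
  ∀ i, F.params i ∈ A

def PFormula.neg {n : ℕ} (F : PFormula L M n) : PFormula L M n :=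
  ⟨F.m, F.fml.not, F.params⟩

variable (L M) in
/-- Two `n`-tuples have the same type over the parameter set `A`. -/
def EqTpOver (A : Set M) {n : ℕ} (a b : Fin n → M) : Prop :=
  ∀ F : PFormula L M n, F.Over A → (F.Realize a ↔ F.Realize b)

/-- The set of elements appearing as coordinates of the tuples `b j`, `j ∈ s`. -/
def coords {ι : Type*} {n : ℕ} (b : ι → Fin n → M) (s : Set ι) : Set M :=
  {x | ∃ j ∈ s, ∃ t, b j t = x}

/-- A complete global type over `M` (the monster) in `n` variables: a complete,
finitely satisfiable set of formulas with parameters. -/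
structure GType (L : FirstOrder.Language.{u, u}) (M : Type u) [L.Structure M] (n : ℕ) where
  mem : PFormula L M n → Prop
  finSat : ∀ s : Finset (PFormula L M n), (∀ F ∈ s, mem F) →
    ∃ a : Fin n → M, ∀ F ∈ s, F.Realize a
  total : ∀ F : PFormula L M n, mem F ∨ mem F.neg

/-- `q` is invariant over `A`. -/
def GType.InvariantOver {n : ℕ} (q : GType L M n) (A : Set M) : Prop :=
  ∀ (m : ℕ) (φ : L.Formula (Fin n ⊕ Fin m)) (b b' : Fin m → M),
    EqTpOver L M A b b' → (q.mem ⟨m, φ, b⟩ ↔ q.mem ⟨m, φ, b'⟩)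

/-- `q` is finitely satisfiable in `A`. -/
def GType.FinSatIn {n : ℕ} (q : GType L M n) (A : Set M) : Prop :=
  ∀ F : PFormula L M n, q.mem F → ∃ a : Fin n → M, (∀ i, a i ∈ A) ∧ F.Realize a

/-- `q` extends `tp(c/A)`. -/
def GType.Extends {n : ℕ} (q : GType L M n) (c : Fin n → M) (A : Set M) : Prop :=
  ∀ F : PFormula L M n, F.Over A → F.Realize c → q.mem F

/-- `a` realizes the restriction `q↾B`. -/
def GType.RealizesRestrict {n : ℕ} (q : GType L M n) (B : Set M) (a : Fin n → M) : Prop :=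
  ∀ F : PFormula L M n, q.mem F → F.Over B → F.Realize a

/-- `b` is a Morley sequence in `q` over `A` (of order type `ω`). -/
def GType.IsMorley {n : ℕ} (q : GType L M n) (A : Set M) (b : ℕ → Fin n → M) : Prop :=
  ∀ i : ℕ, q.RealizesRestrict (A ∪ coords b {j | j < i}) (b i)

/-- `b` is a finite Morley sequence in `q` over `A` (i.e. realizes `q^{⊗k}↾A`). -/
def GType.IsMorleyFin {n : ℕ} (q : GType L M n) (A : Set M) {k : ℕ}
    (b : Fin k → Fin n → M) : Prop :=
  ∀ i, q.RealizesRestrict (A ∪ coords b {j | j < i}) (b i)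

/-- `φ(x;c)` Kim-divides over `A` via the global type `q`: for some `k`, along every Morley
sequence of `q` over `A` the instances are `k`-inconsistent. -/
def KimDividesVia {n m : ℕ} (φ : L.Formula (Fin n ⊕ Fin m)) (A : Set M)
    (q : GType L M m) : Prop :=
  ∃ k : ℕ, ∀ b : ℕ → Fin m → M, q.IsMorley A b →
    ∀ s : Finset ℕ, s.card = k →
      ¬ ∃ a : Fin n → M, ∀ i ∈ s, φ.Realize (Sum.elim a (b i))

/-- `φ(x;c)` Kim-divides over `A`: via some global `A`-invariant type extending `tp(c/A)`. -/
def KimDivides {n m : ℕ} (φ : L.Formula (Fin n ⊕ Fin m)) (c : Fin m → M) (A : Set M) : Prop :=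
  ∃ q : GType L M m, q.InvariantOver A ∧ q.Extends c A ∧ KimDividesVia φ A q

/-- `φ(x;c)` strongly Kim-divides over `A`: via every global `A`-invariant type
extending `tp(c/A)`. -/
def StrongKimDivides {n m : ℕ} (φ : L.Formula (Fin n ⊕ Fin m)) (c : Fin m → M)
    (A : Set M) : Prop :=
  ∀ q : GType L M m, q.InvariantOver A → q.Extends c A → KimDividesVia φ A q

def PFormula.KimDividesOver {n : ℕ} (F : PFormula L M n) (A : Set M) : Prop :=
  KimDivides F.fml F.params A

/-- `F` Kim-forks over `A`: it implies a finite disjunction of formulas Kim-dividing over `A`. -/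
def PFormula.KimForksOver {n : ℕ} (F : PFormula L M n) (A : Set M) : Prop :=
  ∃ (J : ℕ) (G : Fin J → PFormula L M n), (∀ j, (G j).KimDividesOver A) ∧
    ∀ a : Fin n → M, F.Realize a → ∃ j, (G j).Realize a

variable (L M) in
/-- `a ⫝ᴷ_N B` for a finite tuple `a`: no formula of `tp(a/NB)` Kim-divides over `N`. -/
def KIndTuple {m : ℕ} (a : Fin m → M) (N B : Set M) : Prop :=
  ∀ (l : ℕ) (φ : L.Formula (Fin m ⊕ Fin l)) (c : Fin l → M),
    (∀ i, c i ∈ N ∪ B) → φ.Realize (Sum.elim a c) → ¬ KimDivides φ c N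

variable (L M) in
/-- `A ⫝ᴷ_N B` for a set `A`: every finite tuple from `A` is Kim-independent from `B` over `N`. -/
def KIndSet (A N B : Set M) : Prop :=
  ∀ (m : ℕ) (a : Fin m → M), (∀ i, a i ∈ A) → KIndTuple L M a N B

variable (L M) in
/-- `N` is (the underlying set of) an elementary substructure. -/
def IsElemSub (N : Set M) : Prop :=
  ∃ S : L.ElementarySubstructure M, (S : Set M) = N

variable (M) in
/-- The formula `φ(x;y)` has SOP₁ (witnessed in `M`): there is a binary tree of parameter
tuples with (finitely satisfiable) branches and the SOP₁ inconsistency condition. -/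
def HasSOP1 {n m : ℕ} (φ : L.Formula (Fin n ⊕ Fin m)) : Prop :=
  ∃ a : List Bool → Fin m → M,
    (∀ η : ℕ → Bool, ∀ K : ℕ, ∃ x : Fin n → M, ∀ k < K,
      φ.Realize (Sum.elim x (a (List.ofFn (fun i : Fin k => η i))))) ∧
    (∀ ν η : List Bool, (ν ++ [false]) <+: η →
      ¬ ∃ x : Fin n → M, φ.Realize (Sum.elim x (a η)) ∧
        φ.Realize (Sum.elim x (a (ν ++ [true]))))

variable (L M) in
/-- The (theory of the monster) `M` is NSOP₁: no formula has SOP₁. -/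
def NSOP1 : Prop :=
  ∀ (n m : ℕ) (φ : L.Formula (Fin n ⊕ Fin m)), ¬ HasSOP1 M φ

variable (L M) in
/-- `M` is a monster model: every finitely satisfiable set of formulas over a small
parameter set is realized. -/
def IsMonster : Prop :=
  ∀ (n : ℕ) (Φ : Set (PFormula L M n)) (A : Set M), #A < #M →
    (∀ F ∈ Φ, F.Over A) →
    (∀ s : Finset (PFormula L M n), (∀ F ∈ s, F ∈ Φ) → ∃ a : Fin n → M, ∀ F ∈ s, F.Realize a) →
    ∃ a : Fin n → M, ∀ F ∈ Φ, F.Realize a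

/-- A complete type over the parameter set `A` in `n` variables. -/
structure CompleteTypeOn (L : FirstOrder.Language.{u, u}) (M : Type u) [L.Structure M]
    (A : Set M) (n : ℕ) where
  mem : PFormula L M n → Prop
  over' : ∀ F, mem F → F.Over A
  finSat : ∀ s : Finset (PFormula L M n), (∀ F ∈ s, mem F) →
    ∃ a : Fin n → M, ∀ F ∈ s, F.Realize a
  total : ∀ F : PFormula L M n, F.Over A → (mem F ∨ mem F.neg)

/-- `p` (a complete type over the whole model) is an heir of its restriction to `N`. -/
def IsHeirOver {n : ℕ} (p : CompleteTypeOn L M Set.univ n) (N : Set M) : Prop :=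
  ∀ (m l : ℕ) (φ : L.Formula (Fin n ⊕ Fin (m + l))) (c : Fin m → M) (b : Fin l → M),
    (∀ i, c i ∈ N) → p.mem ⟨m + l, φ, Fin.append c b⟩ →
    ∃ b' : Fin l → M, (∀ i, b' i ∈ N) ∧ p.mem ⟨m + l, φ, Fin.append c b'⟩

variable (L M) in
/-- The sequence `a` is indiscernible over the parameter set `N`. -/
def IndiscernibleOver (N : Set M) {n : ℕ} (a : ℕ → Fin n → M) : Prop :=
  ∀ (k m : ℕ) (idx idx' : Fin k → ℕ), StrictMono idx → StrictMono idx' →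
    ∀ (φ : L.Formula ((Fin k × Fin n) ⊕ Fin m)) (c : Fin m → M), (∀ t, c t ∈ N) →
      (φ.Realize (Sum.elim (fun p => a (idx p.1) p.2) c) ↔
        φ.Realize (Sum.elim (fun p => a (idx' p.1) p.2) c))

variable (L M) in
/-- `tp(a/B)` is finitely satisfiable in `N`. -/
def TupTypeFinSatIn {n : ℕ} (a : Fin n → M) (B N : Set M) : Prop :=
  ∀ (m : ℕ) (φ : L.Formula (Fin n ⊕ Fin m)) (c : Fin m → M),
    (∀ i, c i ∈ B) → φ.Realize (Sum.elim a c) →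
    ∃ a' : Fin n → M, (∀ i, a' i ∈ N) ∧ φ.Realize (Sum.elim a' c)

variable (L M) in
/-- `b` is a coheir sequence over `N`: each `tp(b i / N b_{<i})` is finitely satisfiable
in `N`. -/
def IsCoheirSeq (N : Set M) {n : ℕ} (b : ℕ → Fin n → M) : Prop :=
  ∀ i : ℕ, TupTypeFinSatIn L M (b i) (N ∪ coords b {j | j < i}) N

variable (L M) in
/-- Kim's lemma for Kim-dividing holds in (the theory of) `M`. -/
def KimsLemma : Prop :=
  ∀ (n m : ℕ) (φ : L.Formula (Fin n ⊕ Fin m)) (c : Fin m → M) (N : Set M),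
    IsElemSub L M N → KimDivides φ c N → StrongKimDivides φ c N

theorem statement1 {X : Type u} (κ : Cardinal.{u}) (hκ : ℵ₀ ≤ κ)
    (hX : Order.succ κ ≤ #X) {ι : Type u} (hι : #ι ≤ κ) (S : ι → Set (Set X))
    (h : ∀ i, ∃ C, IsClubOn κ (Set.univ : Set X) C ∧ C ⊆ S i) :
    ∃ C, IsClubOn κ (Set.univ : Set X) C ∧ C ⊆ ⋂ i, S i := by
  classical
  choose C hC hCS using h
  -- The "full" club of all κ-sized sets
  set Cf : Set (Set X) := {Y | #Y = κ} with hCfdef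
  have hCf : IsClubOn κ (Set.univ : Set X) Cf := by
    refine ⟨fun Y hY => ⟨Set.subset_univ _, hY⟩, fun Y _ hY => ⟨Y, hY, le_refl _⟩,
      fun c hcne hcsub _ hccard => ?_⟩
    obtain ⟨Y0, hY0⟩ := hcne
    have h1 : κ ≤ #(⋃₀ c) := by
      rw [← hcsub hY0]
      exact Cardinal.mk_le_mk_of_subset (Set.subset_sUnion_of_mem hY0)
    have h2 : #(⋃₀ c) ≤ κ := by
      refine le_trans (Cardinal.mk_sUnion_le c) ?_
      calc #c * ⨆ s : c, #(s : Set X) ≤ κ * κ := by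
            refine mul_le_mul' hccard (ciSup_le' fun s => ?_)
            exact le_of_eq (hcsub s.2)
        _ = κ := Cardinal.mul_eq_self hκ
    exact le_antisymm h2 h1
  -- family over `Option ι` (so it is always nonempty)
  set D : Option ι → Set (Set X) := fun o => o.elim Cf C with hDdef
  have hclub : ∀ o, IsClubOn κ (Set.univ : Set X) (D o) := by
    rintro (_ | i)
    · exact hCf
    · exact hC i
  refine ⟨⋂ o, D o, ⟨?_, ?_, ?_⟩, ?_⟩
  · -- members are κ-sized subsets
    intro Y hY
    exact (hclub none).1 Y (Set.mem_iInter.1 hY none)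
  · -- unboundedness
    intro Y0 _ hY0
    have hg : ∀ (o : Option ι) (Y : Set X), #Y = κ → ∃ Z, Z ∈ D o ∧ Y ⊆ Z := by
      intro o Y hY
      obtain ⟨Z, hZ1, hZ2⟩ := (hclub o).2.1 Y (Set.subset_univ _) hY
      exact ⟨Z, hZ1, hZ2⟩
    choose! g hg1 hg2 using hg
    -- iterate ω times
    let Y : ℕ → Set X := fun n => Nat.rec Y0 (fun _ Yn => ⋃ o, g o Yn) n
    have hYsucc : ∀ n, Y (n + 1) = ⋃ o, g o (Y n) := fun n => rfl
    have hsize : ∀ n, #↥(Y n) = κ := by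
      intro n
      induction n with
      | zero => exact hY0
      | succ n ih =>
        have hsub : g none (Y n) ⊆ Y (n + 1) := by
          rw [hYsucc]; exact Set.subset_iUnion (fun o => g o (Y n)) none
        have hlow : κ ≤ #↥(Y (n + 1)) := by
          have := ((hclub none).1 _ (hg1 none (Y n) ih)).2
          rw [← this]
          exact Cardinal.mk_le_mk_of_subset hsub
        have hup : #↥(Y (n + 1)) ≤ κ := by
          rw [hYsucc]
          refine le_trans (Cardinal.mk_iUnion_le _) ?_
          have hOpt : #(Option ι) ≤ κ := by
            rw [Cardinal.mk_option]
            calc #ι + 1 ≤ κ + κ := add_le_add hι (le_trans Cardinal.one_le_aleph0 hκ)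
              _ = κ := Cardinal.add_eq_self hκ
          calc #(Option ι) * ⨆ o, #(g o (Y n)) ≤ κ * κ := by
                refine mul_le_mul' hOpt (ciSup_le' fun o => ?_)
                exact le_of_eq ((hclub o).1 _ (hg1 o (Y n) ih)).2
            _ = κ := Cardinal.mul_eq_self hκ
        exact le_antisymm hup hlow
    have hstep : ∀ n o, g o (Y n) ⊆ Y (n + 1) := by
      intro n o; rw [hYsucc]; exact Set.subset_iUnion (fun o => g o (Y n)) o
    have hmonoY : Monotone Y := by
      refine monotone_nat_of_le_succ fun n => ?_
      exact (hg2 none (Y n) (hsize n)).trans (hstep n none)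
    have hmonog : ∀ o, Monotone (fun n => g o (Y n)) := by
      intro o
      refine monotone_nat_of_le_succ fun n => ?_
      exact (hstep n o).trans (hg2 o _ (hsize (n + 1)))
    set Z : Set X := ⋃ n, Y n with hZdef
    have hZeq : ∀ o, ⋃₀ Set.range (fun n => g o (Y n)) = Z := by
      intro o
      rw [Set.sUnion_range]
      apply le_antisymm
      · exact Set.iUnion_mono' fun n => ⟨n + 1, hstep n o⟩
      · exact Set.iUnion_mono' fun n => ⟨n, hg2 o (Y n) (hsize n)⟩
    have hZmem : ∀ o, Z ∈ D o := by
      intro o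
      rw [← hZeq o]
      refine (hclub o).2.2 _ ⟨g o (Y 0), ⟨0, rfl⟩⟩ ?_ ?_ ?_
      · rintro W ⟨n, rfl⟩; exact hg1 o (Y n) (hsize n)
      · rintro W ⟨n, rfl⟩ W' ⟨m, rfl⟩ _
        rcases le_total n m with hnm | hnm
        · exact Or.inl (hmonog o hnm)
        · exact Or.inr (hmonog o hnm)
      · exact le_trans (Set.countable_range _).le_aleph0 hκ
    refine ⟨Z, Set.mem_iInter.2 hZmem, ?_⟩
    exact Set.subset_iUnion Y 0
  · -- closedness
    intro c hcne hcsub hchain hccard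
    refine Set.mem_iInter.2 fun o => ?_
    exact (hclub o).2.2 c hcne (fun W hW => Set.mem_iInter.1 (hcsub hW) o) hchain hccard
  · -- contained in the intersection
    intro W hW
    refine Set.mem_iInter.2 fun i => ?_
    exact hCS i (Set.mem_iInter.1 hW (some i))

end Paper
end

section
/- Suppose X is a set and λ ≤ κ < |X| are infinite cardinals. Given a stationary subset 𝒮 ⊆ [X]^κ and, for each Y ∈ 𝒮, a stationary subset S_Y ⊆ [Y]^λ, the union 𝒮' = ⋃_{Y ∈ 𝒮} S_Y is a stationary subset of [X]^λ. -/
open FirstOrder Set Cardinal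

universe u

namespace Paper

/-! ### First-order formulas with parameters, types, Kim-dividing -/

variable (L : FirstOrder.Language.{u, u}) (M : Type u) [L.Structure M]

variable {L M}

/-! ### Auxiliary machinery for `statement3` -/

section Statement3Aux

variable {X : Type u}

/-- Iterated choice of club members over finite sets. -/
noncomputable def gfun (ext : Set X → Set X) (P : Set X) : ℕ → Finset X → Set X
  | 0, e => ext (↑e ∪ P)
  | n + 1, e => ext ((↑e ∪ P) ∪ ⋃ e' ∈ {e' : Finset X | e' ⊆ e}, gfun ext P n e')

/-- The monotone finitary extension function. -/
noncomputable def ffun (ext : Set X → Set X) (P : Set X) (e : Finset X) : Set X :=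
  gfun ext P (e.card + 1) e

/-- Union of `ffun` over all finite subsets of `W`. -/
noncomputable def gu (ext : Set X → Set X) (P : Set X) (W : Set X) : Set X :=
  ⋃ e ∈ {e : Finset X | ↑e ⊆ W}, ffun ext P e

/-- Bundled hypotheses for the extension function. -/
structure ExtSpec (lam : Cardinal.{u}) (C : Set (Set X)) (ext : Set X → Set X)
    (P : Set X) : Prop where
  h0 : ℵ₀ ≤ lam
  hP : #P = lam
  hmem : ∀ Q : Set X, #Q = lam → ext Q ∈ C
  hsub : ∀ Q : Set X, #Q = lam → Q ⊆ ext Q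
  hCcard : ∀ Y ∈ C, #Y = lam

variable {lam : Cardinal.{u}} {C : Set (Set X)} {ext : Set X → Set X} {P : Set X}

lemma card_union_le_of_le {c : Cardinal.{u}} (h0 : ℵ₀ ≤ c) {A B : Set X} (hA : #A ≤ c)
    (hB : #B ≤ c) : #(A ∪ B : Set X) ≤ c :=
  (mk_union_le _ _).trans (Cardinal.add_le_of_le h0 hA hB)

lemma ExtSpec.card_coe_union (H : ExtSpec lam C ext P) (e : Finset X) :
    #((↑e ∪ P : Set X)) = lam :=
  le_antisymm (card_union_le_of_le H.h0 ((e.finite_toSet.lt_aleph0).le.trans H.h0) H.hP.le)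
    (H.hP ▸ mk_le_mk_of_subset Set.subset_union_right)

lemma ExtSpec.gfun_spec (H : ExtSpec lam C ext P) :
    ∀ (n : ℕ) (e : Finset X), gfun ext P n e ∈ C ∧ (↑e ∪ P) ⊆ gfun ext P n e ∧
      ∀ e' ⊆ e, ∀ m < n, gfun ext P m e' ⊆ gfun ext P n e := by
  intro n
  induction n with
  | zero =>
    intro e
    have hQ : #((↑e ∪ P : Set X)) = lam := H.card_coe_union e
    exact ⟨H.hmem _ hQ, H.hsub _ hQ, fun e' _ m hm => absurd hm (Nat.not_lt_zero m)⟩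
  | succ n IH =>
    intro e
    have hfin : {e' : Finset X | e' ⊆ e}.Finite :=
      Set.Finite.ofFinset e.powerset (by simp [Finset.mem_powerset])
    haveI : Nonempty ↥{e' : Finset X | e' ⊆ e} := ⟨⟨e, by simp⟩⟩
    have hUle : #(⋃ e' ∈ {e' : Finset X | e' ⊆ e}, gfun ext P n e') ≤ lam := by
      calc #(⋃ e' ∈ {e' : Finset X | e' ⊆ e}, gfun ext P n e')
          ≤ #{e' : Finset X | e' ⊆ e} * ⨆ e' : {e' : Finset X | e' ⊆ e}, #(gfun ext P n e') :=
            Cardinal.mk_biUnion_le _ _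
        _ ≤ lam * lam := mul_le_mul' (hfin.lt_aleph0.le.trans H.h0)
            (ciSup_le' fun e' => (H.hCcard _ (IH e'.1).1).le)
        _ = lam := Cardinal.mul_eq_self H.h0
    have hQ : #(((↑e ∪ P) ∪ ⋃ e' ∈ {e' : Finset X | e' ⊆ e}, gfun ext P n e' : Set X)) = lam := by
      refine le_antisymm (card_union_le_of_le H.h0 (H.card_coe_union e).le hUle) ?_
      exact H.hP ▸ mk_le_mk_of_subset (Set.subset_union_right.trans Set.subset_union_left)
    have heq : gfun ext P (n + 1) e =
        ext ((↑e ∪ P) ∪ ⋃ e' ∈ {e' : Finset X | e' ⊆ e}, gfun ext P n e') := rfl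
    refine ⟨heq ▸ H.hmem _ hQ, ?_, ?_⟩
    · rw [heq]
      exact Set.subset_union_left.trans (H.hsub _ hQ)
    · intro e' he' m hm
      have base : gfun ext P n e' ⊆ gfun ext P (n + 1) e := by
        rw [heq]
        refine (Set.subset_biUnion_of_mem (u := fun e'' => gfun ext P n e'')
          (show e' ∈ {e'' : Finset X | e'' ⊆ e} from he')).trans ?_
        exact Set.subset_union_right.trans (H.hsub _ hQ)
      rcases Nat.lt_succ_iff_lt_or_eq.mp hm with hmn | rfl
      · exact ((IH e').2.2 e' subset_rfl m hmn).trans base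
      · exact base

lemma ExtSpec.ffun_mem (H : ExtSpec lam C ext P) (e : Finset X) : ffun ext P e ∈ C :=
  (H.gfun_spec _ e).1

lemma ExtSpec.subset_ffun (H : ExtSpec lam C ext P) (e : Finset X) :
    ↑e ⊆ ffun ext P e :=
  Set.subset_union_left.trans (H.gfun_spec _ e).2.1

lemma ExtSpec.ffun_mono (H : ExtSpec lam C ext P) {e e' : Finset X} (h : e ⊆ e') :
    ffun ext P e ⊆ ffun ext P e' := by
  rcases eq_or_ne e e' with rfl | hne
  · exact subset_rfl
  · have hlt : e.card < e'.card := Finset.card_lt_card (lt_of_le_of_ne h hne)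
    exact (H.gfun_spec (e'.card + 1) e').2.2 e h (e.card + 1) (by omega)

lemma ExtSpec.subset_gu (H : ExtSpec lam C ext P) {W : Set X} : W ⊆ gu ext P W := by
  intro x hx
  refine Set.mem_biUnion (show ({x} : Finset X) ∈ {e : Finset X | ↑e ⊆ W} from by simpa) ?_
  exact H.subset_ffun {x} (by simp)

lemma gu_mono {W W' : Set X} (h : W ⊆ W') : gu ext P W ⊆ gu ext P W' := by
  refine Set.iUnion₂_subset fun e he => Set.subset_biUnion_of_mem ?_
  exact Set.Subset.trans he h

lemma gu_subset {Y W : Set X} (hcl : ∀ e : Finset X, ↑e ⊆ Y → ffun ext P e ⊆ Y)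
    (hWY : W ⊆ Y) : gu ext P W ⊆ Y :=
  Set.iUnion₂_subset fun e he => hcl e (he.trans hWY)

lemma mk_setOf_finset_le {W : Set X} (hW : ℵ₀ ≤ #W) : #{e : Finset X | ↑e ⊆ W} ≤ #W := by
  classical
  haveI : Infinite ↥W := Cardinal.aleph0_le_mk_iff.mp hW
  have hinj : Function.Injective
      (fun e : {e : Finset X | ↑e ⊆ W} => Finset.subtype (· ∈ W) e.1) := by
    rintro ⟨e₁, h₁⟩ ⟨e₂, h₂⟩ h
    simp only at h
    refine Subtype.ext ?_
    ext x
    constructor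
    · intro hx
      have hxW : x ∈ W := h₁ hx
      have hmem : (⟨x, hxW⟩ : ↥W) ∈ Finset.subtype (· ∈ W) e₁ := Finset.mem_subtype.mpr hx
      rw [h] at hmem
      exact Finset.mem_subtype.mp hmem
    · intro hx
      have hxW : x ∈ W := h₂ hx
      have hmem : (⟨x, hxW⟩ : ↥W) ∈ Finset.subtype (· ∈ W) e₂ := Finset.mem_subtype.mpr hx
      rw [← h] at hmem
      exact Finset.mem_subtype.mp hmem
  calc #{e : Finset X | ↑e ⊆ W} ≤ #(Finset ↥W) := Cardinal.mk_le_of_injective hinj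
    _ = #↥W := Cardinal.mk_finset_of_infinite _

lemma ExtSpec.gu_card_le (H : ExtSpec lam C ext P) {W : Set X} (hW : lam ≤ #W) :
    #(gu ext P W) ≤ #W := by
  have hW0 : ℵ₀ ≤ #W := H.h0.trans hW
  haveI : Nonempty ↥{e : Finset X | ↑e ⊆ W} := ⟨⟨∅, by simp⟩⟩
  calc #(gu ext P W)
      ≤ #{e : Finset X | ↑e ⊆ W} * ⨆ e : {e : Finset X | ↑e ⊆ W}, #(ffun ext P e.1) :=
        Cardinal.mk_biUnion_le _ _
    _ ≤ #↥W * lam := mul_le_mul' (mk_setOf_finset_le hW0)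
        (ciSup_le' fun e => (H.hCcard _ (H.ffun_mem e.1)).le)
    _ ≤ #↥W * #↥W := mul_le_mul' le_rfl hW
    _ = #↥W := Cardinal.mul_eq_self hW0

lemma chain_witness {c : Set (Set X)} (hne : c.Nonempty) (hch : IsChain (· ⊆ ·) c)
    {e : Finset X} (he : ↑e ⊆ ⋃₀ c) : ∃ Y ∈ c, ↑e ⊆ Y := by
  haveI : Nonempty ↥c := hne.to_subtype
  have hdir : Directed (· ⊆ ·) (fun Y : c => (Y : Set X)) := hch.directedOn.directed_val
  rw [Set.sUnion_eq_iUnion] at he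
  obtain ⟨i, hi⟩ := hdir.exists_mem_subset_of_finset_subset_biUnion he
  exact ⟨i, i.2, hi⟩

lemma ExtSpec.gu_mem (H : ExtSpec lam C ext P)
    (hC3 : ∀ c : Set (Set X), c.Nonempty → c ⊆ C → IsChain (· ⊆ ·) c → #c ≤ lam → ⋃₀ c ∈ C) :
    ∀ (ν : Cardinal.{u}) (W : Set X), #W = ν → ν ≤ lam → gu ext P W ∈ C := by
  intro ν
  refine Cardinal.lt_wf.induction
    (C := fun ν => ∀ W : Set X, #W = ν → ν ≤ lam → gu ext P W ∈ C) ν ?_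
  intro ν IH W hWν hνlam
  by_cases hfin : W.Finite
  · have h1 : gu ext P W ⊆ ffun ext P hfin.toFinset := by
      refine Set.iUnion₂_subset fun e he => H.ffun_mono ?_
      rw [← Finset.coe_subset, hfin.coe_toFinset]
      exact he
    have h2 : ffun ext P hfin.toFinset ⊆ gu ext P W :=
      Set.subset_biUnion_of_mem
        (show hfin.toFinset ∈ {e : Finset X | ↑e ⊆ W} from by simp [hfin.coe_toFinset])
    rw [h1.antisymm h2]
    exact H.ffun_mem _
  · subst hWν
    have hW0 : ℵ₀ ≤ #W := Cardinal.aleph0_le_mk_iff.mpr (Set.infinite_coe_iff.mpr hfin)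
    haveI hnonempty : Nonempty ((#W).ord.ToType) := by
      refine Ordinal.toType_nonempty_iff_ne_zero.2 ?_
      rw [Ne, Cardinal.ord_eq_zero]
      intro h
      rw [h] at hW0
      exact Cardinal.aleph0_ne_zero (le_zero_iff.mp hW0)
    have hcardT : #((#W).ord.ToType) = #↥W := by rw [Cardinal.mk_toType, Cardinal.card_ord]
    obtain ⟨w⟩ := Cardinal.eq.mp hcardT
    set Wi : (#W).ord.ToType → Set X := fun i => (fun j => ((w j : ↥W) : X)) '' Set.Iic i
      with hWidef
    have hWiW : ∀ i, Wi i ⊆ W := by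
      rintro i x ⟨j, -, rfl⟩
      exact (w j).2
    have hmono : ∀ i j, i ≤ j → Wi i ⊆ Wi j :=
      fun i j hij => Set.image_mono (Set.Iic_subset_Iic.2 hij)
    have hcard : ∀ i, #(Wi i) < #W := by
      intro i
      refine lt_of_le_of_lt Cardinal.mk_image_le ?_
      have h1 : #(Set.Iic i) = #(Set.Iio i) + 1 := by
        rw [← Set.Iio_insert]
        exact Cardinal.mk_insert (by simp)
      rw [h1]
      rcases lt_or_ge (#(Set.Iio i)) ℵ₀ with hlt | hge
      · exact lt_of_lt_of_le (Cardinal.add_lt_aleph0 hlt Cardinal.one_lt_aleph0) hW0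
      · rw [Cardinal.add_one_eq hge]
        exact Cardinal.mk_Iio_ord_toType i
    have hin : ∀ i, gu ext P (Wi i) ∈ C :=
      fun i => IH _ (hcard i) _ rfl ((hcard i).le.trans hνlam)
    have hWeq : W = ⋃ i, Wi i := by
      apply Set.Subset.antisymm
      · intro x hx
        exact Set.mem_iUnion.2 ⟨w.symm ⟨x, hx⟩, ⟨w.symm ⟨x, hx⟩, Set.mem_Iic.2 le_rfl, by simp⟩⟩
      · exact Set.iUnion_subset hWiW
    have hgueq : gu ext P W = ⋃ i, gu ext P (Wi i) := by
      apply Set.Subset.antisymm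
      · refine Set.iUnion₂_subset fun e he => ?_
        have hdir : Directed (· ⊆ ·) Wi := fun i j => (le_total i j).elim
          (fun h => ⟨j, hmono _ _ h, subset_rfl⟩) (fun h => ⟨i, subset_rfl, hmono _ _ h⟩)
        have he' : ↑e ⊆ ⋃ i, Wi i := by rw [← hWeq]; exact he
        obtain ⟨i, hi⟩ := hdir.exists_mem_subset_of_finset_subset_biUnion he'
        have hffun : ffun ext P e ⊆ gu ext P (Wi i) :=
          Set.subset_biUnion_of_mem (show e ∈ {e : Finset X | ↑e ⊆ Wi i} from hi)
        exact hffun.trans (Set.subset_iUnion (fun i => gu ext P (Wi i)) i)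
      · exact Set.iUnion_subset fun i => gu_mono (hWiW i)
    rw [hgueq, ← Set.sUnion_range]
    refine hC3 _ (Set.range_nonempty _) ?_ ?_ ?_
    · rintro _ ⟨i, rfl⟩
      exact hin i
    · rintro _ ⟨i, rfl⟩ _ ⟨j, rfl⟩ -
      rcases le_total i j with h | h
      · exact Or.inl (gu_mono (hmono _ _ h))
      · exact Or.inr (gu_mono (hmono _ _ h))
    · exact mk_range_le.trans (by rw [hcardT]; exact hνlam)

end Statement3Aux

theorem statement3 {X : Type u} (lam kap : Cardinal.{u}) (h0 : ℵ₀ ≤ lam) (h1 : lam ≤ kap)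
    (h2 : kap < #X) (S : Set (Set X)) (hS : IsStationaryOn kap Set.univ S)
    (T : (Y : Set X) → Y ∈ S → Set (Set X))
    (hT : ∀ (Y : Set X) (hY : Y ∈ S), IsStationaryOn lam Y (T Y hY)) :
    IsStationaryOn lam Set.univ (⋃ (Y : Set X) (hY : Y ∈ S), T Y hY) := by
  classical
  constructor
  · rintro Y' hY'
    simp only [Set.mem_iUnion] at hY'
    obtain ⟨Y, hY, hmem⟩ := hY'
    exact ⟨Set.subset_univ _, ((hT Y hY).1 Y' hmem).2⟩
  · intro C hC
    obtain ⟨hC1, hC2, hC3⟩ := hC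
    have hex : ∀ Q : Set X, #Q = lam → ∃ Z, Z ∈ C ∧ Q ⊆ Z := by
      intro Q hQ
      obtain ⟨Z, hZC, hQZ⟩ := hC2 Q (Set.subset_univ _) hQ
      exact ⟨Z, hZC, hQZ⟩
    choose! ext hextmem hextsub using hex
    obtain ⟨P, hP⟩ := Cardinal.le_mk_iff_exists_set.mp (le_of_lt (lt_of_le_of_lt h1 h2))
    have H : ExtSpec lam C ext P := ⟨h0, hP, hextmem, hextsub, fun Y hY => (hC1 Y hY).2⟩
    have hkap0 : ℵ₀ ≤ kap := h0.trans h1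
    set D : Set (Set X) := {Y : Set X | #Y = kap ∧ ∀ e : Finset X, ↑e ⊆ Y → ffun ext P e ⊆ Y}
      with hDdef
    have hDclub : IsClubOn kap Set.univ D := by
      refine ⟨fun Y hY => ⟨Set.subset_univ _, hY.1⟩, ?_, ?_⟩
      · intro Y₀ _ hY₀
        set Yn : ℕ → Set X := fun n => Nat.rec Y₀ (fun _ Y => Y ∪ gu ext P Y) n with hYndef
        have hYnsucc : ∀ n, Yn (n + 1) = Yn n ∪ gu ext P (Yn n) := fun n => rfl
        have hcard : ∀ n, #(Yn n) = kap := by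
          intro n
          induction n with
          | zero => exact hY₀
          | succ n ih =>
            rw [hYnsucc]
            refine le_antisymm ?_ (ih ▸ mk_le_mk_of_subset Set.subset_union_left)
            refine card_union_le_of_le hkap0 ih.le ?_
            exact (H.gu_card_le (by rw [ih]; exact h1)).trans ih.le
        have hYmono : Monotone Yn := monotone_nat_of_le_succ fun n => by
          rw [hYnsucc]; exact Set.subset_union_left
        have hchain : IsChain (· ⊆ ·) (Set.range Yn) := by
          rintro _ ⟨m, rfl⟩ _ ⟨n, rfl⟩ -
          rcases le_total m n with h | h
          · exact Or.inl (hYmono h)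
          · exact Or.inr (hYmono h)
        refine ⟨⋃₀ Set.range Yn, ⟨?_, ?_⟩, Set.subset_sUnion_of_mem (Set.mem_range_self 0)⟩
        · refine le_antisymm ?_ ?_
          · refine (Cardinal.mk_sUnion_le _).trans ?_
            haveI : Nonempty ↥(Set.range Yn) := ⟨⟨Yn 0, Set.mem_range_self 0⟩⟩
            have h1' : #(Set.range Yn) ≤ ℵ₀ :=
              Cardinal.mk_le_aleph0_iff.mpr (Set.countable_range Yn).to_subtype
            have h2' : ⨆ s : Set.range Yn, #(s : Set X) ≤ kap := by
              refine ciSup_le' fun s => ?_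
              obtain ⟨n, hn⟩ := s.2
              exact le_of_eq (by rw [← hn]; exact hcard n)
            calc #(Set.range Yn) * ⨆ s : Set.range Yn, #(s : Set X)
                ≤ kap * kap := mul_le_mul' (h1'.trans hkap0) h2'
              _ = kap := Cardinal.mul_eq_self hkap0
          · exact (hcard 0) ▸ mk_le_mk_of_subset (Set.subset_sUnion_of_mem (Set.mem_range_self 0))
        · intro e he
          obtain ⟨Y', ⟨n, rfl⟩, hen⟩ := chain_witness ⟨Yn 0, Set.mem_range_self 0⟩ hchain he
          have h1' : ffun ext P e ⊆ gu ext P (Yn n) :=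
            Set.subset_biUnion_of_mem (show e ∈ {e : Finset X | ↑e ⊆ Yn n} from hen)
          refine h1'.trans ?_
          refine Set.Subset.trans ?_ (Set.subset_sUnion_of_mem ⟨n + 1, rfl⟩)
          rw [hYnsucc]
          exact Set.subset_union_right
      · intro c hne hcD hch hccard
        haveI : Nonempty ↥c := hne.to_subtype
        constructor
        · refine le_antisymm ?_ ?_
          · refine (Cardinal.mk_sUnion_le _).trans ?_
            have h2' : ⨆ s : c, #(s : Set X) ≤ kap := ciSup_le' fun s => ((hcD s.2).1).le
            calc #↥c * ⨆ s : c, #(s : Set X) ≤ kap * kap := mul_le_mul' hccard h2'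
              _ = kap := Cardinal.mul_eq_self hkap0
          · obtain ⟨Y, hY⟩ := hne
            exact ((hcD hY).1) ▸ mk_le_mk_of_subset (Set.subset_sUnion_of_mem hY)
        · intro e he
          obtain ⟨Y, hYc, heY⟩ := chain_witness hne hch he
          exact ((hcD hYc).2 e heY).trans (Set.subset_sUnion_of_mem hYc)
    obtain ⟨Y, hYS, hYD⟩ := hS.2 D hDclub
    set C' : Set (Set X) := {W | W ∈ C ∧ W ⊆ Y} with hC'def
    have hC'club : IsClubOn lam Y C' := by
      refine ⟨fun W hW => ⟨hW.2, (hC1 W hW.1).2⟩, ?_, ?_⟩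
      · intro Z hZY hZ
        refine ⟨gu ext P Z, ⟨H.gu_mem hC3 (#Z) Z rfl hZ.le, gu_subset hYD.2 hZY⟩, H.subset_gu⟩
      · intro c hne hsub hch hccard
        exact ⟨hC3 c hne (fun W hW => (hsub hW).1) hch hccard,
          Set.sUnion_subset fun W hW => (hsub hW).2⟩
    obtain ⟨W, hWT, hWC'⟩ := (hT Y hYS).2 C' hC'club
    refine ⟨W, ?_, hWC'.1⟩
    exact Set.mem_iUnion.2 ⟨Y, Set.mem_iUnion.2 ⟨hYS, hWT⟩⟩


end Paper
end

section
/- Let κ be a cardinal and A ⊆ B sets with κ ≤ |A|. If S ⊆ [A]^κ is stationary in [A]^κ, then the set S^B = {Y ∈ [B]^κ : Y ∩ A ∈ S} is stationary in [B]^κ. -/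
open FirstOrder Set Cardinal

universe u

namespace Paper

/-! ### First-order formulas with parameters, types, Kim-dividing -/

variable (L : FirstOrder.Language.{u, u}) (M : Type u) [L.Structure M]

variable {L M}

/-! ### Auxiliary material for `statement4` -/

/-- Key lemma: unions of a monotone club-valued assignment over finsets contained in an
initial segment of an enumeration stay in the club. -/
lemma key_club {X : Type u} {κ : Cardinal.{u}} {B : Set X} {C : Set (Set X)}
    (hC : IsClubOn κ B C) :
    ∀ ξ : Ordinal.{u}, ξ ≤ κ.ord → ∀ (z : Ordinal.{u} → X) (V : Finset X → Set X),
      (∀ F, V F ∈ C) → (∀ F G : Finset X, F ⊆ G → V F ⊆ V G) →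
      ⋃₀ (V '' {F : Finset X | ↑F ⊆ z '' Set.Iio ξ}) ∈ C := by
  intro ξ
  induction ξ using Ordinal.induction with
  | h ξ IH =>
    intro hξ z V hV hmono
    classical
    rcases Ordinal.zero_or_succ_or_isSuccLimit ξ with rfl | ⟨η, rfl⟩ | hlim
    · have h0 : z '' Set.Iio (0 : Ordinal) = ∅ := by
        simp [Set.eq_empty_iff_forall_notMem, not_lt_zero]
      have h1 : ⋃₀ (V '' {F : Finset X | ↑F ⊆ z '' Set.Iio (0 : Ordinal)}) = V ∅ := by
        apply subset_antisymm
        · rintro x ⟨_, ⟨F, hF, rfl⟩, hx⟩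
          have hFe : F = ∅ :=
            Finset.coe_eq_empty.1 (Set.subset_empty_iff.1 (h0 ▸ hF))
          exact hFe ▸ hx
        · intro x hx
          exact ⟨V ∅, ⟨∅, by simp, rfl⟩, hx⟩
      rw [h1]
      exact hV ∅
    · have hη : η < Order.succ η := Order.lt_succ η
      have himg : z '' Set.Iio (Order.succ η) = insert (z η) (z '' Set.Iio η) := by
        have : Set.Iio (Order.succ η) = insert η (Set.Iio η) := by
          ext i; simp [Order.lt_succ_iff, le_iff_lt_or_eq, or_comm]
        rw [this, Set.image_insert_eq]
      have heq : ⋃₀ (V '' {F : Finset X | ↑F ⊆ z '' Set.Iio (Order.succ η)})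
          = ⋃₀ ((fun F => V (insert (z η) F)) '' {F : Finset X | ↑F ⊆ z '' Set.Iio η}) := by
        apply subset_antisymm
        · rintro x ⟨_, ⟨F, hF, rfl⟩, hx⟩
          refine ⟨V (insert (z η) (F.erase (z η))), ⟨F.erase (z η), ?_, rfl⟩, ?_⟩
          · intro v hv
            simp only [Finset.coe_erase, Set.mem_diff, Finset.mem_coe] at hv
            have := hF hv.1
            rw [himg] at this
            rcases this with h | h
            · exact absurd h hv.2
            · exact h
          · refine hmono _ _ ?_ hx
            intro v hv
            by_cases hveq : v = z η
            · simp [hveq]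
            · exact Finset.mem_insert_of_mem (Finset.mem_erase.2 ⟨hveq, hv⟩)
        · rintro x ⟨_, ⟨F, hF, rfl⟩, hx⟩
          refine ⟨V (insert (z η) F), ⟨insert (z η) F, ?_, rfl⟩, hx⟩
          simp only [Set.mem_setOf_eq, Finset.coe_insert, himg]
          exact Set.insert_subset_insert hF
      rw [heq]
      exact IH η hη (le_of_lt (lt_of_lt_of_le hη hξ)) z _ (fun F => hV _)
        (fun F G h => hmono _ _ (Finset.insert_subset_insert _ h))
    · set u : Ordinal.{u} → Set X := fun η => ⋃₀ (V '' {F : Finset X | ↑F ⊆ z '' Set.Iio η})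
        with hu
      have hbound : ∀ F : Finset X, ↑F ⊆ z '' Set.Iio ξ → ∃ η < ξ, ↑F ⊆ z '' Set.Iio η := by
        intro F
        induction F using Finset.induction_on with
        | empty => intro _; exact ⟨0, hlim.pos, by simp⟩
        | @insert a F ha iha =>
          intro hins
          rw [Finset.coe_insert, Set.insert_subset_iff] at hins
          obtain ⟨η₁, hη₁, hF₁⟩ := iha hins.2
          obtain ⟨i, hi, hia⟩ := hins.1
          refine ⟨max η₁ (Order.succ i), max_lt hη₁ (hlim.succ_lt hi), ?_⟩
          rw [Finset.coe_insert, Set.insert_subset_iff]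
          constructor
          · exact ⟨i, lt_of_lt_of_le (Order.lt_succ i) (le_max_right _ _), hia⟩
          · exact hF₁.trans (Set.image_mono (Set.Iio_subset_Iio (le_max_left _ _)))
      have heq : ⋃₀ (V '' {F : Finset X | ↑F ⊆ z '' Set.Iio ξ}) = ⋃₀ (u '' Set.Iio ξ) := by
        apply subset_antisymm
        · rintro x ⟨_, ⟨F, hF, rfl⟩, hx⟩
          obtain ⟨η, hη, hFη⟩ := hbound F hF
          exact ⟨u η, ⟨η, hη, rfl⟩, ⟨V F, ⟨F, hFη, rfl⟩, hx⟩⟩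
        · rintro x ⟨_, ⟨η, hη, rfl⟩, hx⟩
          obtain ⟨_, ⟨F, hF, rfl⟩, hx⟩ := hx
          exact ⟨V F, ⟨F, hF.trans (Set.image_mono (Set.Iio_subset_Iio hη.le)), rfl⟩, hx⟩
      rw [heq]
      apply hC.2.2
      · exact ⟨u 0, 0, hlim.pos, rfl⟩
      · rintro _ ⟨η, hη, rfl⟩
        exact IH η hη (hη.le.trans hξ) z V hV hmono
      · have humono : ∀ η η' : Ordinal, η ≤ η' → u η ⊆ u η' := by
          rintro η η' h x ⟨_, ⟨F, hF, rfl⟩, hx⟩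
          exact ⟨V F, ⟨F, hF.trans (Set.image_mono (Set.Iio_subset_Iio h)), rfl⟩, hx⟩
        rintro _ ⟨η, _, rfl⟩ _ ⟨η', _, rfl⟩ _
        rcases le_total η η' with h | h
        · exact Or.inl (humono _ _ h)
        · exact Or.inr (humono _ _ h)
      · have h1 : Cardinal.lift.{u+1} #(u '' Set.Iio ξ) ≤ Cardinal.lift.{u+1} κ := by
          calc Cardinal.lift.{u+1} #(u '' Set.Iio ξ) ≤ Cardinal.lift.{u} #(Set.Iio ξ) :=
                Cardinal.mk_image_le_lift
            _ = Cardinal.lift.{u} (Cardinal.lift.{u+1} ξ.card) := by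
                rw [Ordinal.mk_Iio_ordinal]
            _ ≤ Cardinal.lift.{u} (Cardinal.lift.{u+1} κ) := by
                apply Cardinal.lift_le.2
                apply Cardinal.lift_le.2
                simpa using Ordinal.card_le_card hξ
            _ = Cardinal.lift.{u+1} κ := by simp
        exact Cardinal.lift_le.1 h1

/-- Recursive choice of club elements indexed by finite sets. -/
noncomputable def auxV {X : Type u} (cF : Set X → Set X) (A : Set X) (F : Finset X) : Set X :=
  cF ((↑F ∩ A) ∪ ⋃ (G : Finset X) (_ : G ⊂ F), auxV cF A G)
termination_by F.card
decreasing_by exact Finset.card_lt_card (by assumption)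

lemma auxV_def {X : Type u} (cF : Set X → Set X) (A : Set X) (F : Finset X) :
    auxV cF A F = cF ((↑F ∩ A) ∪ ⋃ (G : Finset X) (_ : G ⊂ F), auxV cF A G) := by
  rw [auxV]

lemma auxV_spec {X : Type u} {κ : Cardinal.{u}} (hκ : ℵ₀ ≤ κ) {A B : Set X} (hAB : A ⊆ B)
    {C : Set (Set X)} (hC : IsClubOn κ B C) (cF : Set X → Set X)
    (hcF : ∀ W : Set X, W ⊆ B → #W ≤ κ → cF W ∈ C ∧ W ⊆ cF W) :
    ∀ F : Finset X, auxV cF A F ∈ C ∧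
      ((↑F ∩ A) ∪ ⋃ (G : Finset X) (_ : G ⊂ F), auxV cF A G) ⊆ auxV cF A F := by
  intro F
  induction F using Finset.strongInduction with
  | _ F IH =>
    set W : Set X := (↑F ∩ A) ∪ ⋃ (G : Finset X) (_ : G ⊂ F), auxV cF A G with hW
    have hWB : W ⊆ B := by
      apply Set.union_subset
      · exact (Set.inter_subset_right).trans hAB
      · apply Set.iUnion₂_subset
        intro G hG
        exact (hC.1 _ (IH G hG).1).1
    have hWκ : #W ≤ κ := by
      apply (Cardinal.mk_union_le _ _).trans
      have h1 : #(↑F ∩ A : Set X) ≤ κ :=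
        le_trans (le_of_lt ((Set.toFinite _).lt_aleph0)) hκ
      have h2 : #(⋃ (G : Finset X) (_ : G ⊂ F), auxV cF A G) ≤ κ := by
        have hrw : (⋃ (G : Finset X) (_ : G ⊂ F), auxV cF A G)
            = ⋃ (p : {G : Finset X // G ⊂ F}), auxV cF A p.1 := by
          rw [Set.iUnion_subtype]
        rw [hrw]
        apply (Cardinal.mk_iUnion_le _).trans
        have hfin : Finite {G : Finset X // G ⊂ F} := by
          have : {G : Finset X | G ⊂ F}.Finite := by
            apply Set.Finite.subset (F.powerset : Finset (Finset X)).finite_toSet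
            intro G hG
            simpa [Finset.mem_powerset] using hG.1
          exact this
        have hι : #{G : Finset X // G ⊂ F} ≤ κ := by
          have := @Set.Finite.lt_aleph0 (Finset X) {G : Finset X | G ⊂ F} hfin
          exact le_trans this.le hκ
        have hsup : ⨆ (p : {G : Finset X // G ⊂ F}), #(auxV cF A p.1) ≤ κ :=
          ciSup_le' fun p => le_of_eq (hC.1 _ (IH p.1 p.2).1).2
        calc #{G : Finset X // G ⊂ F} * ⨆ (p : {G : Finset X // G ⊂ F}), #(auxV cF A p.1)
            ≤ κ * κ := mul_le_mul' hι hsup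
          _ = κ := Cardinal.mul_eq_self hκ
      calc #(↑F ∩ A : Set X) + #(⋃ (G : Finset X) (_ : G ⊂ F), auxV cF A G)
          ≤ κ + κ := add_le_add h1 h2
        _ = κ := Cardinal.add_eq_self hκ
    have := hcF W hWB hWκ
    rw [auxV_def]
    exact ⟨this.1, this.2⟩

theorem statement4 {X : Type u} (κ : Cardinal.{u}) (hκ : ℵ₀ ≤ κ) {A B : Set X}
    (hAB : A ⊆ B) (hA : κ ≤ #A) (S : Set (Set X)) (hS : IsStationaryOn κ A S) :
    IsStationaryOn κ B {Y : Set X | Y ⊆ B ∧ #Y = κ ∧ Y ∩ A ∈ S} := by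
  classical
  obtain ⟨hS1, hS2⟩ := hS
  constructor
  · rintro Y ⟨h1, h2, -⟩; exact ⟨h1, h2⟩
  intro C hC
  -- a `κ`-sized subset of `A`
  obtain ⟨Z₀, hZ₀A, hZ₀κ⟩ := Cardinal.le_mk_iff_exists_subset.1 hA
  -- choice function into the club
  have hch : ∀ W : Set X, W ⊆ B → #W ≤ κ → ∃ Y, Y ∈ C ∧ W ⊆ Y := by
    intro W hWB hWκ
    have hsub : W ∪ Z₀ ⊆ B := Set.union_subset hWB (hZ₀A.trans hAB)
    have hcard : #(W ∪ Z₀ : Set X) = κ := by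
      apply le_antisymm
      · apply (Cardinal.mk_union_le _ _).trans
        rw [hZ₀κ]
        calc #W + κ ≤ κ + κ := add_le_add hWκ le_rfl
          _ = κ := Cardinal.add_eq_self hκ
      · rw [← hZ₀κ]
        exact Cardinal.mk_le_mk_of_subset Set.subset_union_right
    obtain ⟨Y, hYC, hY⟩ := hC.2.1 _ hsub hcard
    exact ⟨Y, hYC, Set.subset_union_left.trans hY⟩
  set cF : Set X → Set X :=
    fun W => if h : W ⊆ B ∧ #W ≤ κ then (hch W h.1 h.2).choose else ∅ with hcFdef
  have hcF : ∀ W : Set X, W ⊆ B → #W ≤ κ → cF W ∈ C ∧ W ⊆ cF W := by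
    intro W h1 h2
    have hh : W ⊆ B ∧ #W ≤ κ := ⟨h1, h2⟩
    have := (hch W h1 h2).choose_spec
    simp only [hcFdef, dif_pos hh]
    exact this
  have hV := auxV_spec hκ hAB hC cF hcF
  set V : Finset X → Set X := auxV cF A with hVdef
  have hVmem : ∀ F, V F ∈ C := fun F => (hV F).1
  have hVmono : ∀ F G : Finset X, F ⊆ G → V F ⊆ V G := by
    intro F G h
    rcases eq_or_ne F G with rfl | hne
    · exact subset_rfl
    · have hss : F ⊂ G := ⟨h, fun h' => hne (Finset.Subset.antisymm h h')⟩
      refine subset_trans ?_ (hV G).2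
      exact subset_trans (Set.subset_iUnion₂ (s := fun (G' : Finset X) (_ : G' ⊂ G) => V G') F hss)
        Set.subset_union_right
  have hVself : ∀ F : Finset X, (↑F ∩ A : Set X) ⊆ V F := fun F =>
    Set.subset_union_left.trans (hV F).2
  -- the main operator
  set mW : Set X → Set X := fun Z => ⋃₀ (V '' {F : Finset X | ↑F ⊆ Z}) with hmW
  have hmWmono : ∀ Z Z' : Set X, Z ⊆ Z' → mW Z ⊆ mW Z' := by
    rintro Z Z' h x ⟨_, ⟨F, hF, rfl⟩, hx⟩
    exact ⟨V F, ⟨F, hF.trans h, rfl⟩, hx⟩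
  have hmWself : ∀ Z : Set X, Z ⊆ A → Z ⊆ mW Z := by
    intro Z hZA x hx
    refine ⟨V {x}, ⟨{x}, by simpa using hx, rfl⟩, ?_⟩
    apply hVself
    simp [hZA hx]
  have hmWmem : ∀ Z : Set X, Z ⊆ A → #Z = κ → mW Z ∈ C := by
    intro Z hZA hZκ
    have hpos : (0 : Ordinal.{u}) < κ.ord := by
      have h0 : (0 : Cardinal.{u}) < κ := lt_of_lt_of_le Cardinal.aleph0_pos hκ
      simpa [Cardinal.ord_zero] using Cardinal.ord_lt_ord.2 h0
    have hmkZ : #(κ.ord.ToType) = #Z := by rw [Cardinal.mk_ord_toType, hZκ]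
    obtain ⟨e⟩ := Cardinal.eq.1 hmkZ
    set z : Ordinal.{u} → X := fun η =>
      if h : η < κ.ord then ((e ((Ordinal.ToType.mk (o := κ.ord)) ⟨η, h⟩) : Z) : X)
      else ((e ((Ordinal.ToType.mk (o := κ.ord)) ⟨0, hpos⟩) : Z) : X) with hz
    have hzZ : ∀ η, z η ∈ Z := by
      intro η
      simp only [hz]
      split <;> exact Subtype.coe_prop _
    have himg : z '' Set.Iio κ.ord = Z := by
      apply subset_antisymm
      · rintro _ ⟨η, hη, rfl⟩
        exact hzZ η
      · intro x hx
        set σ := (Ordinal.ToType.mk (o := κ.ord)).symm (e.symm ⟨x, hx⟩) with hσ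
        refine ⟨σ.1, σ.2, ?_⟩
        have key : ((e ((Ordinal.ToType.mk (o := κ.ord)) σ) : Z) : X) = x := by
          rw [hσ, OrderIso.apply_symm_apply, Equiv.apply_symm_apply]
        simp only [hz]
        rw [dif_pos (show (σ : Ordinal.{u}) < κ.ord from σ.2)]
        exact key
    have : mW Z = ⋃₀ (V '' {F : Finset X | ↑F ⊆ z '' Set.Iio κ.ord}) := by rw [himg]
    rw [this]
    exact key_club hC κ.ord le_rfl z V hVmem hVmono
  -- continuity of `mW` along chains
  have hchainfin : ∀ c : Set (Set X), c.Nonempty → IsChain (· ⊆ ·) c →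
      ∀ F : Finset X, ↑F ⊆ ⋃₀ c → ∃ Z ∈ c, ↑F ⊆ Z := by
    intro c hcne hchain F
    induction F using Finset.induction_on with
    | empty =>
      intro _
      obtain ⟨Z, hZ⟩ := hcne
      exact ⟨Z, hZ, by simp⟩
    | @insert a F ha iha =>
      intro hins
      rw [Finset.coe_insert, Set.insert_subset_iff] at hins
      obtain ⟨Z₁, hZ₁c, hFZ₁⟩ := iha hins.2
      obtain ⟨Z₂, hZ₂c, haZ₂⟩ := hins.1
      rcases eq_or_ne Z₁ Z₂ with rfl | hne
      · refine ⟨Z₁, hZ₁c, ?_⟩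
        rw [Finset.coe_insert]
        exact Set.insert_subset haZ₂ hFZ₁
      · rcases hchain hZ₁c hZ₂c hne with h | h
        · refine ⟨Z₂, hZ₂c, ?_⟩
          rw [Finset.coe_insert]
          exact Set.insert_subset haZ₂ (hFZ₁.trans h)
        · refine ⟨Z₁, hZ₁c, ?_⟩
          rw [Finset.coe_insert]
          exact Set.insert_subset (h haZ₂) hFZ₁
  have hcont : ∀ c : Set (Set X), c.Nonempty → IsChain (· ⊆ ·) c →
      mW (⋃₀ c) = ⋃ Z ∈ c, mW Z := by
    intro c hcne hchain
    apply subset_antisymm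
    · rintro x ⟨_, ⟨F, hF, rfl⟩, hx⟩
      obtain ⟨Z, hZc, hFZ⟩ := hchainfin c hcne hchain F hF
      exact Set.mem_biUnion hZc ⟨V F, ⟨F, hFZ, rfl⟩, hx⟩
    · apply Set.iUnion₂_subset
      intro Z hZ
      exact hmWmono _ _ (Set.subset_sUnion_of_mem hZ)
  -- the club `E` in `[A]^κ`
  set E : Set (Set X) := {Z : Set X | Z ⊆ A ∧ #Z = κ ∧ mW Z ∩ A = Z} with hE
  have hEclub : IsClubOn κ A E := by
    refine ⟨fun Z hZ => ⟨hZ.1, hZ.2.1⟩, ?_, ?_⟩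
    · -- cofinality
      intro Z hZA hZκ
      set seq : ℕ → Set X := fun n => (fun W => mW W ∩ A)^[n] Z with hseq
      have hseq0 : seq 0 = Z := rfl
      have hstep : ∀ n : ℕ, seq (n + 1) = mW (seq n) ∩ A := by
        intro n
        simp only [hseq, Function.iterate_succ_apply']
      have hinv : ∀ n : ℕ, seq n ⊆ A ∧ #(seq n) = κ ∧ seq n ⊆ seq (n + 1) := by
        intro n
        induction n with
        | zero =>
          refine ⟨hseq0 ▸ hZA, hseq0 ▸ hZκ, ?_⟩
          rw [hstep 0, hseq0]
          exact Set.subset_inter (hmWself Z hZA) hZA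
        | succ n ih =>
          have hsubA : seq (n + 1) ⊆ A := by rw [hstep n]; exact Set.inter_subset_right
          have hcard : #(seq (n + 1)) = κ := by
            apply le_antisymm
            · rw [hstep n]
              calc #(mW (seq n) ∩ A : Set X) ≤ #(mW (seq n)) :=
                    Cardinal.mk_le_mk_of_subset Set.inter_subset_left
                _ = κ := (hC.1 _ (hmWmem (seq n) ih.1 ih.2.1)).2
            · calc κ = #(seq n) := ih.2.1.symm
                _ ≤ #(seq (n + 1)) := Cardinal.mk_le_mk_of_subset ih.2.2
          refine ⟨hsubA, hcard, ?_⟩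
          rw [hstep (n + 1)]
          exact Set.subset_inter (hmWself _ hsubA) hsubA
      have hmono : Monotone seq := monotone_nat_of_le_succ fun n => (hinv n).2.2
      have hrchain : IsChain (· ⊆ ·) (Set.range seq) := by
        rintro _ ⟨m, rfl⟩ _ ⟨n, rfl⟩ _
        rcases le_total m n with h | h
        · exact Or.inl (hmono h)
        · exact Or.inr (hmono h)
      have hrne : (Set.range seq).Nonempty := ⟨seq 0, 0, rfl⟩
      set Zω : Set X := ⋃₀ (Set.range seq) with hZω
      have hsub : ∀ n, seq n ⊆ Zω := fun n => Set.subset_sUnion_of_mem ⟨n, rfl⟩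
      have hZωA : Zω ⊆ A := Set.sUnion_subset (by rintro _ ⟨n, rfl⟩; exact (hinv n).1)
      have hZωκ : #Zω = κ := by
        apply le_antisymm
        · rw [hZω]
          apply (Cardinal.mk_sUnion_le _).trans
          have h1 : #(Set.range seq) ≤ κ :=
            le_trans (Cardinal.mk_le_aleph0_iff.2 (Set.countable_range seq)) hκ
          have h2 : ⨆ t : Set.range seq, #(t : Set X) ≤ κ := by
            apply ciSup_le'
            rintro ⟨_, n, rfl⟩
            exact le_of_eq (hinv n).2.1
          calc #(Set.range seq) * ⨆ t : Set.range seq, #(t : Set X) ≤ κ * κ :=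
                mul_le_mul' h1 h2
            _ = κ := Cardinal.mul_eq_self hκ
        · rw [← (hinv 0).2.1]
          exact Cardinal.mk_le_mk_of_subset (hsub 0)
      have hfix : mW Zω ∩ A = Zω := by
        rw [hZω, hcont _ hrne hrchain]
        have h1 : (⋃ Y ∈ Set.range seq, mW Y) = ⋃ n, mW (seq n) := by
          rw [Set.biUnion_range]
        rw [h1, Set.iUnion_inter]
        apply subset_antisymm
        · apply Set.iUnion_subset
          intro n
          rw [← hstep n]
          exact Set.subset_sUnion_of_mem ⟨n + 1, rfl⟩
        · apply Set.sUnion_subset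
          rintro _ ⟨n, rfl⟩
          refine subset_trans (hinv n).2.2 ?_
          rw [hstep n]
          exact Set.subset_iUnion (fun n => mW (seq n) ∩ A) n
      exact ⟨Zω, ⟨hZωA, hZωκ, hfix⟩, hseq0 ▸ hsub 0⟩
    · -- chain closure
      intro c hcne hcE hchain hccard
      have hZA : ⋃₀ c ⊆ A := Set.sUnion_subset fun Z hZ => (hcE hZ).1
      have hZκ : #(⋃₀ c : Set X) = κ := by
        apply le_antisymm
        · apply (Cardinal.mk_sUnion_le _).trans
          have h2 : ⨆ Z : c, #(Z : Set X) ≤ κ := ciSup_le' fun Z => le_of_eq (hcE Z.2).2.1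
          calc #c * ⨆ Z : c, #(Z : Set X) ≤ κ * κ := mul_le_mul' hccard h2
            _ = κ := Cardinal.mul_eq_self hκ
        · obtain ⟨Z, hZ⟩ := hcne
          rw [← (hcE hZ).2.1]
          exact Cardinal.mk_le_mk_of_subset (Set.subset_sUnion_of_mem hZ)
      refine ⟨hZA, hZκ, ?_⟩
      rw [hcont c hcne hchain, Set.iUnion₂_inter]
      apply subset_antisymm
      · apply Set.iUnion₂_subset
        intro Z hZ
        rw [(hcE hZ).2.2]
        exact Set.subset_sUnion_of_mem hZ
      · intro x hx
        obtain ⟨Z, hZ, hxZ⟩ := hx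
        have : x ∈ mW Z ∩ A := by rw [(hcE hZ).2.2]; exact hxZ
        exact Set.mem_biUnion hZ this
  obtain ⟨Z, hZS, hZE⟩ := hS2 E hEclub
  have hYC : mW Z ∈ C := hmWmem Z hZE.1 hZE.2.1
  obtain ⟨hYB, hYκ⟩ := hC.1 _ hYC
  exact ⟨mW Z, ⟨hYB, hYκ, by rw [hZE.2.2]; exact hZS⟩, hYC⟩

end Paper
end

section
/- Assume T is NSOP₁ with symmetry of ⫝ᴷ over models, and assume the transfer principle: if a ⫝ᴷ_M N with M ≺ N, φ over M, and φ(x,a) Kim-divides over M, then φ(x,a) Kim-divides over N. Then weak transitivity holds: if M ≺ N, a ⫝ᴷ_M N, and a ⫝ᴷ_N B, then a ⫝ᴷ_M B. -/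
open FirstOrder Set Cardinal

universe u

namespace Paper

/-! ### First-order formulas with parameters, types, Kim-dividing -/

variable (L : FirstOrder.Language.{u, u}) (M : Type u) [L.Structure M]

variable {L M}

section Aux

variable {L : FirstOrder.Language.{u, u}} {M : Type u} [L.Structure M]

lemma elim_map_l {α α' β X : Type*} (u : α → X) (p : β → X) (f : α' → α) :
    Sum.elim u p ∘ Sum.map f id = Sum.elim (u ∘ f) p := by
  funext x; cases x <;> rfl

lemma elim_map_r {α β β' X : Type*} (u : α → X) (p : β → X) (f : β' → β) :
    Sum.elim u p ∘ Sum.map id f = Sum.elim u (p ∘ f) := by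
  funext x; cases x <;> rfl

lemma PFormula.realize_neg' {n : ℕ} (F : PFormula L M n) (u : Fin n → M) :
    F.neg.Realize u ↔ ¬ F.Realize u := by
  simp [PFormula.neg, PFormula.Realize]

lemma GType.mem_congr {n : ℕ} (q : GType L M n) {F G : PFormula L M n}
    (h : ∀ u, F.Realize u ↔ G.Realize u) (hF : q.mem F) : q.mem G := by
  classical
  rcases q.total G with hG | hG
  · exact hG
  · exfalso
    have hfs := q.finSat {F, G.neg} ?_
    · obtain ⟨u, hu⟩ := hfs
      have h1 := hu F (by simp)
      have h2 := hu G.neg (by simp)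
      rw [PFormula.realize_neg'] at h2
      exact h2 ((h u).mp h1)
    · intro H hH
      rcases Finset.mem_insert.mp hH with rfl | hH
      · exact hF
      · rw [Finset.mem_singleton.mp hH]; exact hG

lemma coords_comp_subset {ι : Type*} {n n' : ℕ} (b : ι → Fin n → M) (f : Fin n' → Fin n)
    (s : Set ι) : coords (fun j => b j ∘ f) s ⊆ coords b s := by
  rintro x ⟨j, hj, t, rfl⟩; exact ⟨j, hj, f t, rfl⟩

lemma kimDivides_relabel_left {k m l : ℕ} (h : Fin k → Fin m)
    (χ : L.Formula (Fin k ⊕ Fin l)) (c : Fin l → M) (A : Set M)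
    (hKD : KimDivides χ c A) : KimDivides (χ.relabel (Sum.map h id)) c A := by
  obtain ⟨q, hinv, hext, kk, hvia⟩ := hKD
  refine ⟨q, hinv, hext, kk, ?_⟩
  intro b hb s hs hex
  refine hvia b hb s hs ?_
  obtain ⟨x, hx⟩ := hex
  refine ⟨x ∘ h, fun i hi => ?_⟩
  have := hx i hi
  rwa [FirstOrder.Language.Formula.realize_relabel, elim_map_l] at this

lemma kIndTuple_comp {k m : ℕ} (a : Fin m → M) (h : Fin k → Fin m) (N Bs : Set M)
    (ha : KIndTuple L M a N Bs) : KIndTuple L M (a ∘ h) N Bs := by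
  intro l χ c hc hre hKD
  refine ha l (χ.relabel (Sum.map h id)) c hc ?_ (kimDivides_relabel_left h χ c N hKD)
  rw [FirstOrder.Language.Formula.realize_relabel, elim_map_l]
  exact hre

lemma kIndTuple_mono {m : ℕ} (a : Fin m → M) (N B B' : Set M) (h : B' ⊆ N ∪ B)
    (ha : KIndTuple L M a N B) : KIndTuple L M a N B' := by
  intro l φ c hc hre
  refine ha l φ c (fun i => ?_) hre
  rcases hc i with h' | h'
  · exact Or.inl h'
  · exact h h'

lemma kimDivides_equiv {nc l n' : ℕ} (σ : Fin l ≃ Fin n') (ψ : L.Formula (Fin nc ⊕ Fin l))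
    (e : Fin l → M) (A : Set M) (hKD : KimDivides ψ e A) :
    KimDivides (ψ.relabel (Sum.map id σ)) (e ∘ σ.symm) A := by
  classical
  obtain ⟨q, hinv, hext, hvia⟩ := hKD
  set T : PFormula L M n' → PFormula L M l :=
    fun F => ⟨F.m, F.fml.relabel (Sum.map σ.symm id), F.params⟩ with hT
  set S : PFormula L M l → PFormula L M n' :=
    fun F => ⟨F.m, F.fml.relabel (Sum.map σ id), F.params⟩ with hS
  have hTreal : ∀ (F : PFormula L M n') (u : Fin l → M),
      (T F).Realize u ↔ F.Realize (u ∘ σ.symm) := by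
    intro F u
    show (F.fml.relabel (Sum.map σ.symm id)).Realize (Sum.elim u F.params) ↔ _
    rw [FirstOrder.Language.Formula.realize_relabel, elim_map_l]
    rfl
  have hSreal : ∀ (F : PFormula L M l) (w : Fin n' → M),
      (S F).Realize w ↔ F.Realize (w ∘ σ) := by
    intro F w
    show (F.fml.relabel (Sum.map σ id)).Realize (Sum.elim w F.params) ↔ _
    rw [FirstOrder.Language.Formula.realize_relabel, elim_map_l]
    rfl
  refine ⟨⟨fun F => q.mem (T F), ?_, ?_⟩, ?_, ?_, ?_⟩
  · -- finSat
    intro s hs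
    have hmemT : ∀ F ∈ s.image T, q.mem F := by
      intro F hF
      obtain ⟨G, hG, rfl⟩ := Finset.mem_image.mp hF
      exact hs G hG
    obtain ⟨u, hu⟩ := q.finSat (s.image T) hmemT
    exact ⟨u ∘ σ.symm, fun F hF =>
      (hTreal F u).mp (hu (T F) (Finset.mem_image_of_mem T hF))⟩
  · -- total
    intro F
    rcases q.total (T F) with h | h
    · exact Or.inl h
    · refine Or.inr (q.mem_congr ?_ h)
      intro u
      rw [PFormula.realize_neg', hTreal F u, hTreal F.neg u, PFormula.realize_neg']
  · -- invariant
    intro k φf b b' hbb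
    exact hinv k (φf.relabel (Sum.map σ.symm id)) b b' hbb
  · -- extends
    intro F hover hFre
    exact hext (T F) hover ((hTreal F e).mpr hFre)
  · -- Kim-divides via
    obtain ⟨k, hk⟩ := hvia
    refine ⟨k, ?_⟩
    intro b hb s hs hex
    have hbM : GType.IsMorley q A (fun i => b i ∘ σ) := by
      intro i F hF hover
      have hmem : q.mem (T (S F)) := by
        refine q.mem_congr (fun u => ?_) hF
        rw [hTreal (S F) u, hSreal F (u ∘ σ.symm)]
        have : (u ∘ σ.symm) ∘ σ = u := by
          funext x; simp
        rw [this]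
      have hover' : (S F).Over (A ∪ coords b {j | j < i}) := by
        intro t
        rcases hover t with h' | h'
        · exact Or.inl h'
        · exact Or.inr (coords_comp_subset b σ {j | j < i} h')
      have := hb i (S F) hmem hover'
      rwa [hSreal F (b i)] at this
    refine hk (fun i => b i ∘ σ) hbM s hs ?_
    obtain ⟨x, hx⟩ := hex
    refine ⟨x, fun i hi => ?_⟩
    have := hx i hi
    rwa [FirstOrder.Language.Formula.realize_relabel, elim_map_r] at this

end Aux

theorem statement14 (L : FirstOrder.Language.{u, u}) (M : Type u) [L.Structure M]
    (hmon : IsMonster L M) (hNS : NSOP1 L M)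
    (hsym : ∀ N : Set M, IsElemSub L M N → ∀ (k l : ℕ) (a : Fin k → M) (b : Fin l → M),
      KIndTuple L M a N (Set.range b) → KIndTuple L M b N (Set.range a))
    (htrans : ∀ M0 N' : Set M, IsElemSub L M M0 → IsElemSub L M N' → M0 ⊆ N' →
      ∀ (m l n' : ℕ) (a : Fin m → M) (d : Fin l → M), (∀ i, d i ∈ M0) →
        ∀ φ : L.Formula (Fin n' ⊕ Fin (m + l)),
          KIndTuple L M a M0 N' → KimDivides φ (Fin.append a d) M0 →
            KimDivides φ (Fin.append a d) N')
    (M0 Nset : Set M) (hM0 : IsElemSub L M M0) (hNe : IsElemSub L M Nset)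
    (hsub : M0 ⊆ Nset) (B : Set M)
    (m : ℕ) (a : Fin m → M)
    (h1 : KIndTuple L M a M0 Nset) (h2 : KIndTuple L M a Nset B) :
    KIndTuple L M a M0 B := by
  classical
  intro l φ c hc hreal hKD
  -- Step A: tp(c/M0 a) contains a formula Kim-dividing over M0
  have hnc : ¬ KIndTuple L M c M0 (Set.range a) := by
    intro h
    exact hsym M0 hM0 l m c a h l φ c (fun i => Or.inr ⟨i, rfl⟩) hreal hKD
  unfold KIndTuple at hnc
  push_neg at hnc
  obtain ⟨l', ψ, e, he, hre, hkd⟩ := hnc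
  -- Step B: split the tuple e into its part in `range a` and its part in M0
  set P : Fin l' → Prop := fun i => e i ∉ M0 with hP
  set p := Fintype.card {i // P i} with hp
  set t := Fintype.card {i // ¬ P i} with ht
  set eI : {i // P i} ≃ Fin p := Fintype.equivFin _ with heI
  set eJ : {i // ¬ P i} ≃ Fin t := Fintype.equivFin _ with heJ
  set σ : Fin l' ≃ Fin (p + t) :=
    (Equiv.sumCompl P).symm.trans ((Equiv.sumCongr eI eJ).trans finSumFinEquiv) with hσ
  set e₁ : Fin p → M := fun i => e (σ.symm (Fin.castAdd t i)) with he₁def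
  set d : Fin t → M := fun i => e (σ.symm (Fin.natAdd p i)) with hddef
  have hsymm_cast : ∀ i : Fin p, σ.symm (Fin.castAdd t i) = ((eI.symm i : {i // P i}) : Fin l') := by
    intro i
    simp [hσ, Equiv.symm_trans_apply, finSumFinEquiv_symm_apply_castAdd]
  have hsymm_nat : ∀ i : Fin t, σ.symm (Fin.natAdd p i) = ((eJ.symm i : {i // ¬ P i}) : Fin l') := by
    intro i
    simp [hσ, Equiv.symm_trans_apply, finSumFinEquiv_symm_apply_natAdd]
  have hd : ∀ i, d i ∈ M0 := by
    intro i
    have h2' := (eJ.symm i).2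
    rw [hddef]
    simp only [hsymm_nat i]
    simpa [hP] using h2'
  have he₁ : ∀ i, ∃ j, a j = e₁ i := by
    intro i
    have hPi := (eI.symm i).2
    have hmem := he ((eI.symm i : {i // P i}) : Fin l')
    rcases hmem with h' | h'
    · exact absurd h' hPi
    · obtain ⟨j, hj⟩ := h'
      refine ⟨j, ?_⟩
      rw [he₁def]
      simp only [hsymm_cast i]
      exact hj
  choose hfn hah using he₁
  have heq : (e ∘ σ.symm) = Fin.append e₁ d := by
    funext j
    refine Fin.addCases (fun i => ?_) (fun i => ?_) j
    · rw [Fin.append_left]; rfl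
    · rw [Fin.append_right]; rfl
  -- Step C: Kim-dividing formula with parameters (e₁, d)
  have hKD2 : KimDivides (ψ.relabel (Sum.map id σ)) (Fin.append e₁ d) M0 := by
    rw [← heq]
    exact kimDivides_equiv σ ψ e M0 hkd
  have hIa : KIndTuple L M e₁ M0 Nset := by
    have hcomp : e₁ = a ∘ hfn := funext fun i => (hah i).symm
    rw [hcomp]
    exact kIndTuple_comp a hfn M0 Nset h1
  -- transfer Kim-dividing from M0 to Nset
  have hKD3 := htrans M0 Nset hM0 hNe hsub p t l e₁ d hd
    (ψ.relabel (Sum.map id σ)) hIa hKD2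
  -- final contradiction with a ⫝ᴷ_N B
  have h2' : KIndTuple L M a Nset (Set.range c) := by
    refine kIndTuple_mono a Nset B _ ?_ h2
    rintro x ⟨i, rfl⟩
    rcases hc i with h' | h'
    · exact Or.inl (hsub h')
    · exact Or.inr h'
  have hcN : KIndTuple L M c Nset (Set.range a) := hsym Nset hNe m l a c h2'
  refine hcN (p + t) (ψ.relabel (Sum.map id σ)) (Fin.append e₁ d) ?_ ?_ hKD3
  · intro i
    refine Fin.addCases (fun i => ?_) (fun i => ?_) i
    · rw [Fin.append_left]
      exact Or.inr ⟨hfn i, hah i⟩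
    · rw [Fin.append_right]
      exact Or.inl (hsub (hd i))
  · rw [FirstOrder.Language.Formula.realize_relabel, elim_map_r]
    have hcomp2 : Fin.append e₁ d ∘ σ = e := by
      rw [← heq]; funext i; simp
    rw [hcomp2]
    exact hre

end Paper
end
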